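/- arXiv:0904.4060 — 3 statements merged into one kernel-verified Lean document; each statement's English description precedes it below -/
import Mathlib

section
/- Let A = {a_1,...,a_{n+2}} ⊂ R^n be a non-degenerate circuit with b = (b_1,...,b_{n+2}) the signed-cofactor generator of the null space of the lifted matrix Â. Suppose c_1,...,c_{n+2} ∈ C* are such that the exponential sum g(y) = ∑_{i=1}^{n+2} c_i e^{a_i·y} has a degenerate complex root ζ ∈ C^n (i.e., g(ζ) = 0 and ∇g(ζ) = 0). Then ∏_{i=1}^{n+2} |c_i/b_i|^{b_i} = 1. -/
/-- `A = {a 0, …, a (n+1)} ⊂ ℝⁿ` is a (non-degenerate) circuit: it is affinely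
dependent, but every proper subset is affinely independent. -/
def IsNondegCircuit {n : ℕ} (a : Fin (n + 2) → Fin n → ℝ) : Prop :=
  ¬ AffineIndependent ℝ a ∧ ∀ j : Fin (n + 2), AffineIndependent ℝ (a ∘ j.succAbove)

/-- The lifted `(n+1) × (n+2)` matrix `Â` whose `j`-th column is `(1, a j)`. -/
noncomputable def Ahat {n : ℕ} (a : Fin (n + 2) → Fin n → ℝ) :
    Matrix (Fin (n + 1)) (Fin (n + 2)) ℝ :=
  Matrix.of fun i j => Fin.cases 1 (fun i' => a j i') i

/-- `b j = (-1)^j` times the determinant of `Â` with its `j`-th column deleted. -/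
noncomputable def bVec {n : ℕ} (a : Fin (n + 2) → Fin n → ℝ) : Fin (n + 2) → ℝ :=
  fun j => (-1 : ℝ) ^ (j : ℕ) * ((Ahat a).submatrix id j.succAbove).det

/-!
Put `u i = c i * exp (a i ⬝ ζ)`. The equations `g ζ = 0` and `∇g ζ = 0` say exactly that
`Â u = 0`. The vector `b` of signed maximal minors of `Â` also lies in the kernel, and since a
maximal minor of `Â` is nonzero the kernel is the line through `b`. Hence
`c i / b i = t * exp (-(a i ⬝ ζ))` for one `t ≠ 0`, and
`∏ |c i / b i| ^ b i = |t| ^ (∑ b i) * exp (-(∑ b i a i) ⬝ Re ζ) = 1`, again because `Â b = 0`.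
-/

namespace Matrix

variable {R : Type*} [CommRing R] {m : ℕ}

def signedMaxMinors (M : Matrix (Fin (m + 1)) (Fin (m + 2)) R) : Fin (m + 2) → R :=
  fun j => (-1) ^ (j : ℕ) * (M.submatrix id j.succAbove).det

theorem mulVec_signedMaxMinors (M : Matrix (Fin (m + 1)) (Fin (m + 2)) R) :
    M *ᵥ signedMaxMinors M = 0 := by
  funext i
  -- Laplace expansion of the determinant of `M` with row `i` repeated on top, which vanishes
  have h := det_succ_row_zero (of (vecCons (M i) M))
  rw [det_zero_of_row_eq (Fin.succ_ne_zero i).symm rfl] at h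
  simp only [mulVec, dotProduct, signedMaxMinors, Pi.zero_apply, h]
  refine Finset.sum_congr rfl fun j _ => ?_
  change _ = (-1) ^ (j : ℕ) * M i j * (M.submatrix id j.succAbove).det
  ring

theorem signedMaxMinors_map {S : Type*} [CommRing S] (f : R →+* S)
    (M : Matrix (Fin (m + 1)) (Fin (m + 2)) R) :
    signedMaxMinors (M.map f) = f ∘ signedMaxMinors M := by
  funext j
  simp only [signedMaxMinors, Function.comp_apply, map_mul, map_pow, map_neg, map_one,
    RingHom.map_det, RingHom.mapMatrix_apply, submatrix_map]

theorem signedMaxMinors_smul_eq_of_mulVec_eq_zero [IsDomain R]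
    {M : Matrix (Fin (m + 1)) (Fin (m + 2)) R} {j : Fin (m + 2)}
    (hj : signedMaxMinors M j ≠ 0) {v : Fin (m + 2) → R} (hv : M *ᵥ v = 0) :
    signedMaxMinors M j • v = v j • signedMaxMinors M := by
  set x := signedMaxMinors M j • v - v j • signedMaxMinors M
  have hxj : x j = 0 := by simp [x, mul_comm]
  have hMx : M *ᵥ x = 0 := by
    simp [x, mulVec_sub, mulVec_smul, hv, mulVec_signedMaxMinors]
  have hx : (M.submatrix id j.succAbove) *ᵥ (x ∘ j.succAbove) = 0 := by
    funext i
    simpa [mulVec, dotProduct, Fin.sum_univ_succAbove _ j, hxj] using congrFun hMx i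
  have hx0 := eq_zero_of_mulVec_eq_zero (right_ne_zero_of_mul hj) hx
  rw [← sub_eq_zero]
  funext i
  induction i using Fin.succAboveCases j with
  | x => exact hxj
  | p k => exact congrFun hx0 k

end Matrix

open Matrix

section Circuit

variable {n : ℕ}

theorem det_Ahat_submatrix_ne_zero {a : Fin (n + 2) → Fin n → ℝ} {j : Fin (n + 2)}
    (h : AffineIndependent ℝ (a ∘ j.succAbove)) : ((Ahat a).submatrix id j.succAbove).det ≠ 0 := by
  intro hdet
  obtain ⟨v, hv, hmv⟩ := exists_mulVec_eq_zero_iff.2 hdet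
  have hsum : ∑ k, v k = 0 := by
    simpa [mulVec, dotProduct, Ahat] using congrFun hmv 0
  have hcomb : ∑ k, v k • (a ∘ j.succAbove) k = 0 := by
    funext i
    simpa [mulVec, dotProduct, Ahat, mul_comm] using congrFun hmv i.succ
  exact hv <| funext fun k =>
    affineIndependent_iff.mp h Finset.univ v hsum hcomb k (Finset.mem_univ k)

theorem bVec_ne_zero {a : Fin (n + 2) → Fin n → ℝ} {j : Fin (n + 2)}
    (h : AffineIndependent ℝ (a ∘ j.succAbove)) : bVec a j ≠ 0 :=
  mul_ne_zero (pow_ne_zero _ (neg_ne_zero.2 one_ne_zero)) (det_Ahat_submatrix_ne_zero h)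

theorem bVec_eq_signedMaxMinors (a : Fin (n + 2) → Fin n → ℝ) :
    bVec a = (Ahat a).signedMaxMinors :=
  rfl

theorem map_Ahat_mulVec_eq_zero_iff {R : Type*} [CommRing R] (f : ℝ →+* R)
    (a : Fin (n + 2) → Fin n → ℝ) (v : Fin (n + 2) → R) :
    (Ahat a).map f *ᵥ v = 0 ↔ ∑ i, v i = 0 ∧ ∀ k, ∑ i, f (a i k) * v i = 0 := by
  rw [funext_iff, Fin.forall_fin_succ]
  simp [mulVec, dotProduct, Ahat]

theorem sum_bVec_eq_zero_and_sum_mul_bVec_eq_zero (a : Fin (n + 2) → Fin n → ℝ) :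
    ∑ i, bVec a i = 0 ∧ ∀ k, ∑ i, a i k * bVec a i = 0 := by
  simpa using (map_Ahat_mulVec_eq_zero_iff (RingHom.id ℝ) a (bVec a)).1
    (by simpa [bVec_eq_signedMaxMinors] using mulVec_signedMaxMinors (Ahat a))

end Circuit

theorem prod_norm_mul_exp_rpow_eq_one {ι : Type*} [Fintype ι] {n : ℕ} {b : ι → ℝ}
    {a : ι → Fin n → ℝ} (hb : ∑ i, b i = 0) (hab : ∀ k, ∑ i, a i k * b i = 0) {t : ℂ} (ht : t ≠ 0)
    (ζ : Fin n → ℂ) :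
    ∏ i, ‖t * Complex.exp (-∑ k, (a i k : ℂ) * ζ k)‖ ^ b i = 1 := by
  set w : ι → ℂ := fun i => -∑ k, (a i k : ℂ) * ζ k
  have hw : ∑ i, (w i).re * b i = 0 := by
    simp only [w, Complex.neg_re, Complex.re_sum, Complex.re_ofReal_mul, neg_mul,
      Finset.sum_neg_distrib, Finset.sum_mul, neg_eq_zero]
    rw [Finset.sum_comm]
    refine Finset.sum_eq_zero fun k _ => ?_
    simp only [mul_right_comm _ (ζ k).re, ← Finset.sum_mul, hab, zero_mul]
  calc ∏ i, ‖t * Complex.exp (w i)‖ ^ b i = ∏ i, ‖t‖ ^ b i * Real.exp ((w i).re * b i) := by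
        refine Finset.prod_congr rfl fun i _ => ?_
        rw [norm_mul, Complex.norm_exp, Real.mul_rpow (norm_nonneg _) (Real.exp_pos _).le,
          ← Real.exp_mul]
    _ = ‖t‖ ^ (∑ i, b i) * Real.exp (∑ i, (w i).re * b i) := by
        rw [Finset.prod_mul_distrib, Real.rpow_sum_of_pos (norm_pos_iff.2 ht), Real.exp_sum]
    _ = 1 := by rw [hb, hw, Real.rpow_zero, Real.exp_zero, mul_one]

theorem stmt6 {n : ℕ} (a : Fin (n + 2) → Fin n → ℝ) (ha : IsNondegCircuit a)
    (c : Fin (n + 2) → ℂ) (hc : ∀ i, c i ≠ 0) (ζ : Fin n → ℂ)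
    (hg : ∑ i, c i * Complex.exp (∑ k, (a i k : ℂ) * ζ k) = 0)
    (hdg : ∀ k, ∑ i, c i * (a i k : ℂ) * Complex.exp (∑ l, (a i l : ℂ) * ζ l) = 0) :
    ∏ i, ‖c i / (bVec a i : ℂ)‖ ^ (bVec a i) = 1 := by
  set b := bVec a
  set S : Fin (n + 2) → ℂ := fun i => ∑ k, (a i k : ℂ) * ζ k
  set u : Fin (n + 2) → ℂ := fun i => c i * Complex.exp (S i)
  have hb : ∀ i, (b i : ℂ) ≠ 0 := fun i => Complex.ofReal_ne_zero.2 (bVec_ne_zero (ha.2 i))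
  have hu : (Ahat a).map Complex.ofRealHom *ᵥ u = 0 := by
    refine (map_Ahat_mulVec_eq_zero_iff _ a u).2 ⟨hg, fun k => ?_⟩
    rw [← hdg k]
    exact Finset.sum_congr rfl fun i _ => by simp only [u, S, Complex.ofRealHom_eq_coe]; ring
  have hw0 : ((Ahat a).map Complex.ofRealHom).signedMaxMinors 0 ≠ 0 := by
    rw [signedMaxMinors_map]
    exact hb 0
  have hprop := signedMaxMinors_smul_eq_of_mulVec_eq_zero hw0 hu
  rw [signedMaxMinors_map, ← bVec_eq_signedMaxMinors] at hprop
  have hcb : ∀ i, c i / b i = u 0 / b 0 * Complex.exp (-S i) := by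
    intro i
    have h := congrFun hprop i
    simp only [Pi.smul_apply, Function.comp_apply, Complex.ofRealHom_eq_coe, smul_eq_mul, u] at h
    rw [Complex.exp_neg]
    field_simp [hb i, hb 0]
    linear_combination h
  obtain ⟨hbsum, hab⟩ := sum_bVec_eq_zero_and_sum_mul_bVec_eq_zero a
  simp_rw [hcb]
  exact prod_norm_mul_exp_rpow_eq_one hbsum hab
    (div_ne_zero (mul_ne_zero (hc 0) (Complex.exp_ne_zero _)) (hb 0)) ζ
end

section
/- Let A = {a_1,...,a_{n+2}} ⊂ R^n be a non-degenerate circuit and g(y) = ∑ c_i e^{a_i·y} with c_i ∈ R*. Then the real zero set of g contains at most one degenerate point (a point where g and all its partial derivatives vanish). -/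
/-!
At a degenerate point `ζ` of `g`, the coefficient vector `(c i * exp (a i ⬝ᵥ ζ))ᵢ` lies in the
kernel of the lifted matrix `Â`. For a circuit this kernel is a line, so the vectors obtained from
two degenerate points `ζ₁, ζ₂` are proportional. Comparing the ratios of their entries shows that
`a i ⬝ᵥ (ζ₁ - ζ₂)` does not depend on `i`; since the `a i` affinely span `ℝⁿ`, `ζ₁ = ζ₂`.
-/

open Matrix

theorem AffineIndependent.eq_zero_of_comp_succAbove {R V : Type*} [Ring R] [AddCommGroup V]
    [Module R V] {m : ℕ} {p : Fin (m + 1) → V} {j : Fin (m + 1)}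
    (hp : AffineIndependent R (p ∘ j.succAbove)) {w : Fin (m + 1) → R}
    (hw : ∑ i, w i = 0) (hwp : ∑ i, w i • p i = 0) (hj : w j = 0) : w = 0 := by
  rw [Fin.sum_univ_succAbove _ j, hj, zero_add] at hw
  rw [Fin.sum_univ_succAbove _ j, hj, zero_smul, zero_add] at hwp
  have hw' := hp.eq_zero_of_sum_eq_zero (w := w ∘ j.succAbove) hw hwp
  funext i
  obtain rfl | ⟨i, rfl⟩ := Fin.eq_self_or_eq_succAbove j i
  · exact hj
  · exact hw' i (Finset.mem_univ i)

theorem AffineIndependent.mul_eq_mul_of_comp_succAbove {R V : Type*} [CommRing R]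
    [AddCommGroup V] [Module R V] {m : ℕ} {p : Fin (m + 1) → V} {j : Fin (m + 1)}
    (hp : AffineIndependent R (p ∘ j.succAbove)) {u v : Fin (m + 1) → R}
    (hu : ∑ i, u i = 0) (hup : ∑ i, u i • p i = 0)
    (hv : ∑ i, v i = 0) (hvp : ∑ i, v i • p i = 0) (i : Fin (m + 1)) :
    v j * u i = u j * v i := by
  have hw := hp.eq_zero_of_comp_succAbove (w := fun i => v j * u i - u j * v i)
    (by simp only [Finset.sum_sub_distrib, ← Finset.mul_sum, hu, hv, mul_zero, sub_zero])
    (by simp only [sub_smul, mul_smul, Finset.sum_sub_distrib, ← Finset.smul_sum, hup, hvp,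
      smul_zero, sub_zero])
    (sub_eq_zero.2 (mul_comm _ _))
  exact sub_eq_zero.1 (congrFun hw i)

theorem AffineIndependent.linearMap_eq_zero_of_apply_eq {k V M ι : Type*} [Field k]
    [AddCommGroup V] [Module k V] [FiniteDimensional k V] [AddCommGroup M] [Module k M]
    [Fintype ι] {p : ι → V} (hp : AffineIndependent k p)
    (hcard : Fintype.card ι = Module.finrank k V + 1) (f : V →ₗ[k] M)
    (hf : ∀ i j, f (p i) = f (p j)) : f = 0 := by
  have hspan : vectorSpan k (Set.range p) = ⊤ :=
    AffineSubspace.vectorSpan_eq_top_of_affineSpan_eq_top k V V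
      (hp.affineSpan_eq_top_iff_card_eq_finrank_add_one.2 hcard)
  have hker : vectorSpan k (Set.range p) ≤ LinearMap.ker f := by
    rw [vectorSpan_def, Submodule.span_le]
    rintro _ ⟨_, ⟨i, rfl⟩, _, ⟨j, rfl⟩, rfl⟩
    simp [hf i j]
  ext x
  exact hker (hspan ▸ Submodule.mem_top)

theorem sum_mul_exp_smul_eq_zero {ι : Type*} [Fintype ι] {n : ℕ} {a : ι → Fin n → ℝ}
    {c : ι → ℝ} {ζ : Fin n → ℝ}
    (hdg : ∀ k, ∑ i, c i * a i k * Real.exp (∑ l, a i l * ζ l) = 0) :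
    ∑ i, (c i * Real.exp (a i ⬝ᵥ ζ)) • a i = 0 := by
  funext k
  simpa [Finset.sum_apply, dotProduct, mul_right_comm] using hdg k

theorem dotProduct_sub_eq_of_mul_exp_eq {n : ℕ} {x y ζ₁ ζ₂ : Fin n → ℝ} {s t : ℝ}
    (hs : s ≠ 0) (ht : t ≠ 0)
    (h : s * Real.exp (x ⬝ᵥ ζ₂) * (t * Real.exp (y ⬝ᵥ ζ₁)) =
      s * Real.exp (x ⬝ᵥ ζ₁) * (t * Real.exp (y ⬝ᵥ ζ₂))) :
    y ⬝ᵥ (ζ₁ - ζ₂) = x ⬝ᵥ (ζ₁ - ζ₂) := by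
  have hexp : Real.exp (x ⬝ᵥ ζ₂ + y ⬝ᵥ ζ₁) = Real.exp (x ⬝ᵥ ζ₁ + y ⬝ᵥ ζ₂) := by
    rw [Real.exp_add, Real.exp_add]
    apply mul_left_cancel₀ (mul_ne_zero hs ht)
    linear_combination h
  have := Real.exp_injective hexp
  rw [dotProduct_sub, dotProduct_sub]
  linarith

theorem stmt9 {n : ℕ} (a : Fin (n + 2) → Fin n → ℝ) (ha : IsNondegCircuit a)
    (c : Fin (n + 2) → ℝ) (hc : ∀ i, c i ≠ 0) (ζ₁ ζ₂ : Fin n → ℝ)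
    (hg₁ : ∑ i, c i * Real.exp (∑ k, a i k * ζ₁ k) = 0)
    (hdg₁ : ∀ k, ∑ i, c i * a i k * Real.exp (∑ l, a i l * ζ₁ l) = 0)
    (hg₂ : ∑ i, c i * Real.exp (∑ k, a i k * ζ₂ k) = 0)
    (hdg₂ : ∀ k, ∑ i, c i * a i k * Real.exp (∑ l, a i l * ζ₂ l) = 0) :
    ζ₁ = ζ₂ := by
  have hprop := (ha.2 0).mul_eq_mul_of_comp_succAbove hg₁ (sum_mul_exp_smul_eq_zero hdg₁)
    hg₂ (sum_mul_exp_smul_eq_zero hdg₂)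
  have hconst : ∀ i, a i ⬝ᵥ (ζ₁ - ζ₂) = a 0 ⬝ᵥ (ζ₁ - ζ₂) := fun i =>
    dotProduct_sub_eq_of_mul_exp_eq (hc 0) (hc i) (hprop i)
  have hzero := (ha.2 0).linearMap_eq_zero_of_apply_eq (by simp)
    ((dotProductBilin ℝ ℝ).flip (ζ₁ - ζ₂)) fun i j => by
      simp only [LinearMap.flip_apply, dotProductBilin_apply_apply, Function.comp_apply,
        hconst]
  have hself : (ζ₁ - ζ₂) ⬝ᵥ (ζ₁ - ζ₂) = 0 := by
    simpa using LinearMap.congr_fun hzero (ζ₁ - ζ₂)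
  exact sub_eq_zero.1 (dotProduct_self_eq_zero.1 hself)
end

section
/- Let f(x) = ∑_{i=1}^{n+1} c_i x^{a_i} be an honest n-variate (n+1)-nomial with a_1 = 0 (i.e., the points a_2,...,a_{n+1} ∈ R^n are linearly independent) and real nonzero coefficients, with real exponents and x ranging over R_+^n. Then there exist c ∈ R and ℓ ∈ {0,...,n} such that the image f(R_+^n) equals the image of g(x) := c + x_1 + ... + x_ℓ - x_{ℓ+1} - ... - x_n on R_+^n, where c = c_1 and ℓ is the number of positive coefficients among c_2,...,c_{n+1}. -/
/-!
Substituting `x = exp u` turns the monomial `x ^ a_j` into `exp (a_j ⬝ᵥ u)`. Since `a_2, …, a_{n+1}`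
are linearly independent, `u ↦ (a_j ⬝ᵥ u)_j` is onto, so these monomials range independently
over the whole positive orthant, while `x ^ a_1 = 1`. Hence `f(ℝ₊ⁿ) = c_1 + {∑ c_j t_j | t > 0}`,
and this set does not change when each `t_j` is rescaled by `|c_j|` and the `t_j` are permuted so
that the positive coefficients come first.
-/

open Finset

theorem Matrix.mulVec_surjective_of_linearIndependent_row {m n R : Type*} [Fintype m]
    [Fintype n] [Field R] {A : Matrix m n R} (hA : LinearIndependent R A.row) :
    Function.Surjective A.mulVec := by
  have hrange : LinearMap.range A.mulVecLin = ⊤ :=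
    Submodule.eq_top_of_finrank_eq <| by
      rw [← Matrix.rank, hA.rank_matrix, Module.finrank_fintype_fun_eq_card]
  exact LinearMap.range_eq_top.mp hrange

theorem prod_exp_rpow {n : Type*} [Fintype n] (u a : n → ℝ) :
    ∏ k, Real.exp (u k) ^ a k = Real.exp (a ⬝ᵥ u) := by
  simp only [← Real.exp_mul, ← Real.exp_sum, dotProduct, mul_comm]

theorem exists_pos_prod_rpow_eq {m n : Type*} [Fintype m] [Fintype n] {a : m → n → ℝ}
    (ha : LinearIndependent ℝ a) {t : m → ℝ} (ht : ∀ i, 0 < t i) :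
    ∃ x : n → ℝ, (∀ k, 0 < x k) ∧ ∀ i, ∏ k, x k ^ a i k = t i := by
  obtain ⟨u, hu⟩ := Matrix.mulVec_surjective_of_linearIndependent_row (A := Matrix.of a) ha
    (fun i => Real.log (t i))
  refine ⟨fun k => Real.exp (u k), fun k => Real.exp_pos _, fun i => ?_⟩
  rw [prod_exp_rpow, ← Real.exp_log (ht i)]
  exact congrArg Real.exp (congrFun hu i)

def posOrthantImage {ι : Type*} [Fintype ι] (b : ι → ℝ) : Set ℝ :=
  {y | ∃ t : ι → ℝ, (∀ i, 0 < t i) ∧ ∑ i, b i * t i = y}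

section posOrthantImage

variable {ι κ : Type*} [Fintype ι] [Fintype κ]

theorem posOrthantImage_mul_pos (b : ι → ℝ) {w : ι → ℝ} (hw : ∀ i, 0 < w i) :
    posOrthantImage (fun i => b i * w i) = posOrthantImage b := by
  ext y
  constructor
  · rintro ⟨t, ht, rfl⟩
    exact ⟨fun i => w i * t i, fun i => mul_pos (hw i) (ht i), by simp only [mul_assoc]⟩
  · rintro ⟨t, ht, rfl⟩
    refine ⟨fun i => t i / w i, fun i => div_pos (ht i) (hw i), sum_congr rfl fun i _ => ?_⟩
    field_simp [(hw i).ne']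

theorem posOrthantImage_comp_equiv (b : ι → ℝ) (e : κ ≃ ι) :
    posOrthantImage (b ∘ e) = posOrthantImage b := by
  ext y
  constructor
  · rintro ⟨t, ht, rfl⟩
    exact ⟨t ∘ e.symm, fun i => ht _, by rw [← e.sum_comp]; simp⟩
  · rintro ⟨t, ht, rfl⟩
    exact ⟨t ∘ e, fun i => ht _, e.sum_comp (fun i => b i * t i)⟩

theorem posOrthantImage_sign {b : ι → ℝ} (hb : ∀ i, b i ≠ 0) :
    posOrthantImage (fun i => (SignType.sign (b i) : ℝ)) = posOrthantImage b := by
  have h := posOrthantImage_mul_pos (fun i => (SignType.sign (b i) : ℝ))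
    fun i => abs_pos.mpr (hb i)
  simp only [sign_mul_abs] at h
  exact h.symm

end posOrthantImage

theorem exists_perm_sign_eq {n : ℕ} {b : Fin n → ℝ} (hb : ∀ i, b i ≠ 0) :
    ∃ σ : Equiv.Perm (Fin n), ∀ i,
      (SignType.sign (b (σ i)) : ℝ) = if (i : ℕ) < #{j | 0 < b j} then 1 else -1 := by
  set ℓ := #{j | 0 < b j}
  have hℓ : #{i : Fin n | (i : ℕ) < ℓ} = ℓ := by
    rw [Fin.card_filter_val_lt]
    exact min_eq_right (card_le_univ _ |>.trans_eq (Fintype.card_fin n))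
  obtain ⟨σ, hσ⟩ := Equiv.Perm.exists_map_finset_eq _ _ hℓ
  refine ⟨σ, fun i => ?_⟩
  have hmem : 0 < b (σ i) ↔ (i : ℕ) < ℓ := by
    simpa using (congrArg (σ i ∈ ·) hσ).symm
  split_ifs with hi
  · simp [sign_pos (hmem.mpr hi)]
  · simp [sign_neg ((not_lt.mp (hmem.not.mpr hi)).lt_of_ne (hb _))]

theorem setOf_sum_monomials_eq_image {m : ℕ} {ι : Type*} [Fintype ι] {a : Fin (m + 1) → ι → ℝ}
    (ha0 : a 0 = 0) (hind : LinearIndependent ℝ (fun j : Fin m => a j.succ))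
    (c : Fin (m + 1) → ℝ) :
    {y : ℝ | ∃ x : ι → ℝ, (∀ k, 0 < x k) ∧ (∑ i, c i * ∏ k, x k ^ a i k) = y} =
      (c 0 + ·) '' posOrthantImage (fun j : Fin m => c j.succ) := by
  have hsum : ∀ x : ι → ℝ, ∑ i, c i * ∏ k, x k ^ a i k =
      c 0 + ∑ j : Fin m, c j.succ * ∏ k, x k ^ a j.succ k := by
    intro x
    simp [Fin.sum_univ_succ, ha0]
  ext y
  constructor
  · rintro ⟨x, hx, rfl⟩
    exact ⟨_, ⟨_, fun j => prod_pos fun k _ => Real.rpow_pos_of_pos (hx k) _, rfl⟩, (hsum x).symm⟩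
  · rintro ⟨_, ⟨t, ht, rfl⟩, rfl⟩
    obtain ⟨x, hx, hxt⟩ := exists_pos_prod_rpow_eq hind ht
    exact ⟨x, hx, by simp only [hsum, hxt]⟩

theorem setOf_add_sum_ite_neg_eq_image {ι : Type*} [Fintype ι] (c₀ : ℝ) (p : ι → Prop)
    [DecidablePred p] :
    {y : ℝ | ∃ x : ι → ℝ, (∀ i, 0 < x i) ∧ (c₀ + ∑ i, if p i then x i else -x i) = y} =
      (c₀ + ·) '' posOrthantImage (fun i => if p i then 1 else -1) := by
  have hsum : ∀ x : ι → ℝ,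
      ∑ i, (if p i then 1 else -1) * x i = ∑ i, if p i then x i else -x i :=
    fun x => sum_congr rfl fun i _ => by split_ifs <;> ring
  ext y
  constructor
  · rintro ⟨x, hx, rfl⟩
    exact ⟨_, ⟨x, hx, hsum x⟩, rfl⟩
  · rintro ⟨_, ⟨x, hx, rfl⟩, rfl⟩
    exact ⟨x, hx, by rw [hsum]⟩

open Finset in
theorem stmt11 (n : ℕ) (a : Fin (n + 1) → Fin n → ℝ) (c : Fin (n + 1) → ℝ)
    (ha0 : a 0 = 0) (hind : LinearIndependent ℝ (fun i : Fin n => a i.succ))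
    (hc : ∀ i, c i ≠ 0) :
    {y : ℝ | ∃ x : Fin n → ℝ, (∀ i, 0 < x i) ∧ (∑ i, c i * ∏ k, x k ^ a i k) = y} =
    {y : ℝ | ∃ x : Fin n → ℝ, (∀ i, 0 < x i) ∧
      (c 0 + ∑ i : Fin n,
        (if (i : ℕ) < (univ.filter fun i : Fin n => 0 < c i.succ).card then x i else -x i))
        = y} := by
  obtain ⟨σ, hσ⟩ := exists_perm_sign_eq (b := fun j => c j.succ) fun j => hc _
  rw [setOf_sum_monomials_eq_image ha0 hind, setOf_add_sum_ite_neg_eq_image,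
    ← posOrthantImage_sign (b := fun j : Fin n => c j.succ) fun j => hc j.succ,
    ← posOrthantImage_comp_equiv _ σ]
  congr 2
  exact funext hσ
end
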